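/- Let C₂, m, m_phys, c, Λ, λ_C be positive real numbers, let α = 1/137 and Z = 92, and set ℛ = (m_phys/m)·Λ·λ_C. If Z²·α²·m_phys·c²/2 ≤ √(2C₂)·5.67·Z·α^{8/7}·ℛ^{6/7}·m·c², then m ≥ 3.0·10^{−8}·C₂^{−7/2}·(Λλ_C)^{−6}·m_phys. -/

import Mathlib

/-!
Cancel `c²` and raise the inequality to the 7th power. Because `ℛ^{6/7}·m = (m_phys Λ λ_C)^{6/7}·m^{1/7}`,
the bare mass then enters linearly:
`(Z²α² m_phys / 2)^7 ≤ (2C₂)^{7/2} (5.67 Z)^7 α^8 (m_phys Λ λ_C)^6 m`.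
Solving for `m` at `Z = 92`, `α = 1/137`, using `2^{7/2} < 11.32`, gives the constant `3.09·10⁻⁸ ≥ 3.0·10⁻⁸`.
-/

open Real

theorem Real.rpow_pow_of_mul_eq {x p : ℝ} (hx : 0 ≤ x) {n k : ℕ} (hp : p * n = k) :
    (x ^ p) ^ n = x ^ k := by
  rw [← rpow_natCast _ n, ← rpow_mul hx, hp, rpow_natCast]

theorem Real.sqrt_pow_eq_rpow {x : ℝ} (hx : 0 ≤ x) (n : ℕ) : √x ^ n = x ^ ((n : ℝ) / 2) := by
  rw [rpow_div_two_eq_sqrt _ hx, rpow_natCast]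

theorem two_rpow_seven_halves_lt : (2 : ℝ) ^ ((7 : ℝ) / 2) < 11.32 := by
  rw [show (7 : ℝ) = (7 : ℕ) by norm_num, ← sqrt_pow_eq_rpow zero_le_two,
    show √2 ^ 7 = (√2 ^ 2) ^ 3 * √2 by ring, sq_sqrt zero_le_two]
  nlinarith [sqrt_lt' (x := 2) (y := 1.415) (by norm_num) |>.mpr (by norm_num)]

theorem pow_succ_le_of_le_mul_div_rpow_mul {A B P m p : ℝ} (hA : 0 ≤ A) (hP : 0 ≤ P) (hm : 0 < m)
    {k : ℕ} (hp : p * (k + 1 : ℕ) = k) (h : A ≤ B * (P / m) ^ p * m) :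
    A ^ (k + 1) ≤ B ^ (k + 1) * P ^ k * m := by
  calc A ^ (k + 1) ≤ (B * (P / m) ^ p * m) ^ (k + 1) := pow_le_pow_left₀ hA h _
    _ = B ^ (k + 1) * P ^ k * m := by
        rw [mul_pow, mul_pow, rpow_pow_of_mul_eq (div_nonneg hP hm.le) hp, div_pow, pow_succ m]
        field_simp

theorem pow_seven_le_of_binding_le {C m M c K Z α a : ℝ} (hC : 0 ≤ C) (hm : 0 < m) (hM : 0 ≤ M)
    (hc : 0 < c) (hK : 0 ≤ K) (hα : 0 ≤ α)
    (h : Z ^ 2 * α ^ 2 * M * c ^ 2 / 2 ≤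
      √(2 * C) * a * Z * α ^ ((8 : ℝ) / 7) * (M * K / m) ^ ((6 : ℝ) / 7) * m * c ^ 2) :
    (Z ^ 2 * α ^ 2 * M / 2) ^ 7 ≤
      2 ^ ((7 : ℝ) / 2) * C ^ ((7 : ℝ) / 2) * a ^ 7 * Z ^ 7 * α ^ 8 * (M * K) ^ 6 * m := by
  have hcancel : Z ^ 2 * α ^ 2 * M / 2 ≤
      (√(2 * C) * a * Z * α ^ ((8 : ℝ) / 7)) * (M * K / m) ^ ((6 : ℝ) / 7) * m :=
    le_of_mul_le_mul_right (by linarith) (pow_pos hc 2)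
  have h7 := pow_succ_le_of_le_mul_div_rpow_mul (k := 6) (by positivity) (by positivity) hm
    (by norm_num) hcancel
  rwa [mul_pow, mul_pow, mul_pow, rpow_pow_of_mul_eq hα (k := 8) (by norm_num),
    sqrt_pow_eq_rpow (by positivity), mul_rpow zero_le_two hC] at h7

theorem mass_bound_of_pow_seven {m M D K : ℝ} (hM : 0 < M)
    (h : (92 ^ 2 * (1 / 137) ^ 2 * M / 2) ^ 7 ≤
      2 ^ ((7 : ℝ) / 2) * D * 5.67 ^ 7 * 92 ^ 7 * (1 / 137) ^ 8 * (M * K) ^ 6 * m)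
    (hD : 0 ≤ D * K ^ 6 * m) :
    3.0e-8 * M ≤ D * K ^ 6 * m := by
  have hmass : (92 ^ 2 * (1 / 137) ^ 2 / 2) ^ 7 * M ≤
      11.32 * (5.67 ^ 7 * 92 ^ 7 * (1 / 137) ^ 8) * (D * K ^ 6 * m) := by
    refine le_of_mul_le_mul_right ?_ (pow_pos hM 6)
    calc (92 ^ 2 * (1 / 137) ^ 2 / 2) ^ 7 * M * M ^ 6
        = (92 ^ 2 * (1 / 137) ^ 2 * M / 2) ^ 7 := by ring
      _ ≤ 2 ^ ((7 : ℝ) / 2) * (5.67 ^ 7 * 92 ^ 7 * (1 / 137) ^ 8) * (D * K ^ 6 * m) * M ^ 6 := by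
        linarith
      _ ≤ 11.32 * (5.67 ^ 7 * 92 ^ 7 * (1 / 137) ^ 8) * (D * K ^ 6 * m) * M ^ 6 := by
        gcongr; exact two_rpow_seven_halves_lt.le
  have hconst : 3.0e-8 * (11.32 * (5.67 ^ 7 * 92 ^ 7 * (1 / 137) ^ 8)) ≤
      (92 ^ 2 * (1 / 137) ^ 2 / 2 : ℝ) ^ 7 := by norm_num
  nlinarith [mul_le_mul_of_nonneg_right hconst hM.le]

theorem stmt_12 (C₂ m m_phys c Λ lamC α Z ℛ : ℝ)
    (hC₂ : 0 < C₂) (hm : 0 < m) (hmp : 0 < m_phys) (hc : 0 < c)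
    (hΛ : 0 < Λ) (hlam : 0 < lamC)
    (hα : α = 1 / 137) (hZ : Z = 92)
    (hℛ : ℛ = (m_phys / m) * Λ * lamC)
    (h : Z ^ 2 * α ^ 2 * m_phys * c ^ 2 / 2 ≤
      Real.sqrt (2 * C₂) * 5.67 * Z * α ^ ((8 : ℝ) / 7) * ℛ ^ ((6 : ℝ) / 7) * m * c ^ 2) :
    m ≥ 3.0e-8 * C₂ ^ (-(7 : ℝ) / 2) * (Λ * lamC) ^ (-(6 : ℝ)) * m_phys := by
  subst hα hZ
  set K := Λ * lamC
  have hK : 0 < K := mul_pos hΛ hlam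
  rw [show ℛ = m_phys * K / m by rw [hℛ]; ring] at h
  have h7 := pow_seven_le_of_binding_le hC₂.le hm hmp.le hc hK.le (by norm_num) h
  have hX : 0 < C₂ ^ ((7 : ℝ) / 2) * K ^ 6 := by positivity
  have hmass := mass_bound_of_pow_seven hmp (by linarith) (mul_pos hX hm).le
  rw [ge_iff_le, show -(7 : ℝ) / 2 = -(7 / 2) by ring, rpow_neg hC₂.le, rpow_neg hK.le,
    show (6 : ℝ) = (6 : ℕ) by norm_num, rpow_natCast]
  calc 3.0e-8 * (C₂ ^ ((7 : ℝ) / 2))⁻¹ * (K ^ 6)⁻¹ * m_phys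
      = 3.0e-8 * m_phys / (C₂ ^ ((7 : ℝ) / 2) * K ^ 6) := by ring
    _ ≤ m := by rwa [div_le_iff₀ hX, mul_comm m]
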